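/- arXiv:1608.06996 — 2 statements merged into one kernel-verified Lean document; each statement's English description precedes it below -/
import Mathlib

section
/- Define the misère ★-operator on move sets in ℕ₀^d by M★ = P(M), the set of P-positions of the misère-play subtraction game M. For every M ⊆ ℕ₀^d, the sequence M, M★, M★★, … converges pointwise: for every x ∈ ℕ₀^d there exists N such that for all i ≥ N, x ∈ M^i ↔ x ∈ M^N, and the limit set M^∞ satisfies P(M^∞) = M^∞ (i.e., it is reflexive). -/
/-- `x` is a terminal position of the subtraction game with move set `M`:
no move `m ∈ M` satisfies `m ≤ x`. -/
def Terminal {α : Type*} [PartialOrder α] [Sub α] (M : Set α) (x : α) : Prop :=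
  ∀ m ∈ M, ¬ m ≤ x

/-- The set of terminal positions `T_M`. -/
def Tset {α : Type*} [PartialOrder α] [Sub α] (M : Set α) : Set α :=
  {x | Terminal M x}

/-- Misère-play P-positions of a vector subtraction game, by well-founded recursion:
`x` is a P-position iff it has at least one option, and every option `x - m` is an
N-position, i.e. is terminal or has an option `x - m - m'` that is a P-position.
(The guard `x - m - m' < x` is automatic when `0 ∉ M`; when `0 ∈ M` the game is drawn
everywhere and this definition correctly yields no P-positions.) -/
def IsP {α : Type*} [PartialOrder α] [Sub α] [WellFoundedLT α] (M : Set α) : α → Prop :=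
  (wellFounded_lt (α := α)).fix fun x rec =>
    (∃ m ∈ M, m ≤ x) ∧ ∀ m ∈ M, m ≤ x →
      (Terminal M (x - m) ∨
        ∃ m' ∈ M, m' ≤ x - m ∧ ∃ h : x - m - m' < x, rec (x - m - m') h)

/-- The set of misère P-positions (this is also the `★`-operator `M ↦ M★`). -/
def Pset {α : Type*} [PartialOrder α] [Sub α] [WellFoundedLT α] (M : Set α) : Set α :=
  {x | IsP M x}

/-- `x` is a misère N-position: terminal, or has an option that is a P-position. -/
def IsN {α : Type*} [PartialOrder α] [Sub α] [WellFoundedLT α] (M : Set α) (x : α) : Prop :=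
  Terminal M x ∨ ∃ m ∈ M, m ≤ x ∧ IsP M (x - m)

/-- The set of misère N-positions. -/
def Nset {α : Type*} [PartialOrder α] [Sub α] [WellFoundedLT α] (M : Set α) : Set α :=
  {x | IsN M x}

/-- The set of minimal elements of `M`. -/
def minSet {α : Type*} [PartialOrder α] (M : Set α) : Set α :=
  {m ∈ M | ∀ m' ∈ M, m' ≤ m → m' = m}

/-- Pointwise convergence of the iterates of the `★`-operator to the set `L`. -/
def LimitsTo {α : Type*} [PartialOrder α] [Sub α] [WellFoundedLT α] (M L : Set α) : Prop :=
  ∀ x : α, ∃ N : ℕ, ∀ i ≥ N, (x ∈ Pset^[i] M ↔ x ∈ L)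

/-- The one-dimensional reflexive games `M_k` (with `M_0 = ∅`). -/
def Mk (k : ℕ) : Set ℕ :=
  {n | 1 ≤ k ∧ ∃ i j : ℕ, k ≤ j ∧ j ≤ 2 * k - 1 ∧ n = i * (3 * k - 1) + j}

theorem isP_iff {α : Type*} [PartialOrder α] [Sub α] [WellFoundedLT α] (M : Set α) (x : α) :
    IsP M x ↔ (∃ m ∈ M, m ≤ x) ∧ ∀ m ∈ M, m ≤ x →
      (Terminal M (x - m) ∨
        ∃ m' ∈ M, m' ≤ x - m ∧ ∃ _h : x - m - m' < x, IsP M (x - m - m')) := by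
  conv_lhs => rw [IsP, WellFounded.fix_eq]
  exact Iff.rfl

-- order lemmas
variable {d : ℕ}

theorem wsub_le (x m : Fin d → ℕ) : x - m ≤ x := fun i => Nat.sub_le _ _

theorem wsub_lt {x m : Fin d → ℕ} (hm : m ≤ x) (h0 : m ≠ 0) : x - m < x := by
  refine lt_of_le_of_ne (wsub_le x m) ?_
  intro h
  apply h0
  funext i
  have h1 : x i - m i = x i := congrFun h i
  have h2 : m i ≤ x i := hm i
  show m i = 0
  omega

theorem vle_zero {y : Fin d → ℕ} (h : y ≤ 0) : y = 0 := le_antisymm h (fun i => Nat.zero_le _)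

theorem wsub_self' (x : Fin d → ℕ) : x - x = 0 := by funext i; exact Nat.sub_self _

theorem wfinite_Iic (x : Fin d → ℕ) : (Set.Iic x).Finite := by
  refine (Set.Finite.pi (fun i => Set.finite_Iic (x i))).subset ?_
  intro y hy i _
  exact hy i

theorem mem_pset {M : Set (Fin d → ℕ)} {x : Fin d → ℕ} : x ∈ Pset M ↔ IsP M x := Iff.rfl

/-- Locality: `IsP M x` only depends on `M ∩ Iic x`. -/
theorem isP_congr_aux : ∀ x : Fin d → ℕ, ∀ M M' : Set (Fin d → ℕ),
    (∀ y, y ≤ x → (y ∈ M ↔ y ∈ M')) → IsP M x → IsP M' x := by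
  intro x
  induction x using WellFoundedLT.induction with
  | _ x IH =>
    intro M M' hag hP
    rw [isP_iff] at hP ⊢
    obtain ⟨⟨m, hmM, hmx⟩, hall⟩ := hP
    refine ⟨⟨m, (hag m hmx).mp hmM, hmx⟩, ?_⟩
    intro m hmM' hmx
    have hmM : m ∈ M := (hag m hmx).mpr hmM'
    rcases hall m hmM hmx with hT | ⟨m', hm'M, hm'le, hlt, hP'⟩
    · left
      intro k hkM' hk
      exact hT k ((hag k (hk.trans (wsub_le x m))).mpr hkM') hk
    · right
      refine ⟨m', (hag m' (hm'le.trans (wsub_le x m))).mp hm'M, hm'le, hlt, ?_⟩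
      exact IH _ hlt M M' (fun y hy => hag y (hy.trans ((wsub_le _ _).trans (wsub_le _ _)))) hP'

theorem isP_congr {x : Fin d → ℕ} {M M' : Set (Fin d → ℕ)}
    (hag : ∀ y, y ≤ x → (y ∈ M ↔ y ∈ M')) : IsP M x ↔ IsP M' x :=
  ⟨isP_congr_aux x M M' hag, isP_congr_aux x M' M (fun y hy => (hag y hy).symm)⟩

theorem not_isP_zero (M : Set (Fin d → ℕ)) : ¬ IsP M 0 := by
  rw [isP_iff]
  rintro ⟨⟨m, hmM, hm0⟩, hall⟩
  have hm : m = 0 := vle_zero hm0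
  subst hm
  rcases hall 0 hmM le_rfl with hT | ⟨m', hm'M, hm'le, hlt, -⟩
  · exact hT 0 hmM (by rw [wsub_self'])
  · exact absurd (vle_zero hlt.le) (fun h => lt_irrefl _ (h ▸ hlt))

/-- The key monotonicity lemma. -/
theorem isP_mono {M M' : Set (Fin d → ℕ)} {x : Fin d → ℕ}
    (h0 : (0 : Fin d → ℕ) ∉ M) (h0' : (0 : Fin d → ℕ) ∉ M')
    (hlt : ∀ y, y < x → (y ∈ M ↔ y ∈ M'))
    (hPlt : ∀ y, y < x → (IsP M y ↔ IsP M' y))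
    (hx : x ∈ M → x ∈ M') :
    IsP M x → IsP M' x := by
  intro hP
  rw [isP_iff] at hP ⊢
  obtain ⟨⟨m, hmM, hmx⟩, hall⟩ := hP
  have hmem : ∀ k, k ∈ M → k ≤ x → k ∈ M' := by
    intro k hkM hkx
    rcases eq_or_lt_of_le hkx with rfl | hklt
    · exact hx hkM
    · exact (hlt k hklt).mp hkM
  refine ⟨⟨m, hmem m hmM hmx, hmx⟩, ?_⟩
  intro m hmM' hmx
  rcases eq_or_lt_of_le hmx with rfl | hmltx
  · -- the move `m = x` leads to `0`, which is terminal
    left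
    rw [wsub_self']
    intro k hkM' hk0
    exact h0' ((vle_zero hk0) ▸ hkM')
  · have hmM : m ∈ M := (hlt m hmltx).mpr hmM'
    have hmne : m ≠ 0 := fun h => h0 (h ▸ hmM)
    have hsublt : x - m < x := wsub_lt hmx hmne
    rcases hall m hmM hmx with hT | ⟨m', hm'M, hm'le, hguard, hP'⟩
    · left
      intro k hkM' hk
      have hkx : k < x := lt_of_le_of_lt hk hsublt
      exact hT k ((hlt k hkx).mpr hkM') hk
    · right
      have hm'x : m' < x := lt_of_le_of_lt hm'le hsublt
      exact ⟨m', (hlt m' hm'x).mp hm'M, hm'le, hguard, (hPlt _ hguard).mp hP'⟩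

/-- Pointwise stabilization of the iterates. -/
theorem stab_point (M : Set (Fin d → ℕ)) :
    ∀ x : Fin d → ℕ, ∃ N : ℕ, 1 ≤ N ∧
      ∀ i j, N ≤ i → N ≤ j → (x ∈ Pset^[i] M ↔ x ∈ Pset^[j] M) := by
  intro x
  induction x using WellFoundedLT.induction with
  | _ x IH =>
    choose! Nf _h1 hNf using IH
    have hfin : {y : Fin d → ℕ | y < x}.Finite :=
      (wfinite_Iic x).subset (fun y hy => Set.mem_Iic.mpr (le_of_lt hy))
    set N₀ := hfin.toFinset.sup Nf + 1 with hN₀def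
    have hN₀1 : 1 ≤ N₀ := Nat.le_add_left 1 _
    have hN₀ : ∀ y, y < x → Nf y ≤ N₀ := fun y hy =>
      le_trans (Finset.le_sup (hfin.mem_toFinset.mpr hy)) (Nat.le_succ _)
    have hagree : ∀ i j, N₀ ≤ i → N₀ ≤ j → ∀ y, y < x →
        (y ∈ Pset^[i] M ↔ y ∈ Pset^[j] M) := fun i j hi hj y hy =>
      hNf y hy i j (le_trans (hN₀ y hy) hi) (le_trans (hN₀ y hy) hj)
    have h0mem : ∀ i, N₀ ≤ i → (0 : Fin d → ℕ) ∉ Pset^[i] M := by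
      intro i hi
      obtain ⟨k, rfl⟩ : ∃ k, i = k + 1 := ⟨i - 1, by omega⟩
      rw [Function.iterate_succ_apply']
      exact not_isP_zero _
    have hPagree : ∀ i j, N₀ ≤ i → N₀ ≤ j → ∀ y, y < x →
        (IsP (Pset^[i] M) y ↔ IsP (Pset^[j] M) y) := by
      intro i j hi hj y hy
      have h := hNf y hy (i + 1) (j + 1) (le_trans (hN₀ y hy) (by omega))
        (le_trans (hN₀ y hy) (by omega))
      rwa [Function.iterate_succ_apply', Function.iterate_succ_apply'] at h
    have htrans : ∀ i j, N₀ ≤ i → N₀ ≤ j →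
        (x ∈ Pset^[i] M → x ∈ Pset^[j] M) →
        (x ∈ Pset^[i + 1] M → x ∈ Pset^[j + 1] M) := by
      intro i j hi hj himp
      rw [Function.iterate_succ_apply', Function.iterate_succ_apply']
      exact isP_mono (h0mem i hi) (h0mem j hj) (hagree i j hi hj)
        (hPagree i j hi hj) himp
    by_cases hdir : x ∈ Pset^[N₀] M → x ∈ Pset^[N₀ + 1] M
    · -- eventually increasing
      have chain : ∀ k, x ∈ Pset^[N₀ + k] M → x ∈ Pset^[N₀ + k + 1] M := by
        intro k
        induction k with
        | zero => exact hdir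
        | succ k ih => exact htrans (N₀ + k) (N₀ + k + 1) (by omega) (by omega) ih
      have mono : ∀ i k, N₀ ≤ i → x ∈ Pset^[i] M → x ∈ Pset^[i + k] M := by
        intro i k hi h
        induction k with
        | zero => exact h
        | succ k ih =>
          have e : N₀ + (i + k - N₀) = i + k := by omega
          have hc := chain (i + k - N₀)
          rw [e] at hc
          exact hc ih
      by_cases hex : ∃ K, N₀ ≤ K ∧ x ∈ Pset^[K] M
      · obtain ⟨K, hK, hbK⟩ := hex
        refine ⟨K, by omega, fun i j hi hj => ?_⟩
        have h1 : x ∈ Pset^[i] M := by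
          have := mono K (i - K) (by omega) hbK
          rwa [show K + (i - K) = i by omega] at this
        have h2 : x ∈ Pset^[j] M := by
          have := mono K (j - K) (by omega) hbK
          rwa [show K + (j - K) = j by omega] at this
        exact iff_of_true h1 h2
      · push_neg at hex
        exact ⟨N₀, hN₀1, fun i j hi hj =>
          iff_of_false (hex i (by omega)) (hex j (by omega))⟩
    · -- x ∈ Pset^[N₀] M and x ∉ Pset^[N₀+1] M : eventually decreasing
      push_neg at hdir
      have chain : ∀ k, x ∈ Pset^[N₀ + k + 1] M → x ∈ Pset^[N₀ + k] M := by
        intro k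
        induction k with
        | zero => exact fun _ => hdir.1
        | succ k ih => exact htrans (N₀ + k + 1) (N₀ + k) (by omega) (by omega) ih
      have anti : ∀ i k, N₀ ≤ i → x ∈ Pset^[i + k] M → x ∈ Pset^[i] M := by
        intro i k hi
        induction k with
        | zero => exact id
        | succ k ih =>
          intro h
          apply ih
          have e : N₀ + (i + k - N₀) = i + k := by omega
          have hc := chain (i + k - N₀)
          rw [e] at hc
          exact hc h
      have hnot : ∀ j, N₀ + 1 ≤ j → x ∉ Pset^[j] M := by
        intro j hj h
        apply hdir.2
        have := anti (N₀ + 1) (j - (N₀ + 1)) (by omega)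
        rw [show N₀ + 1 + (j - (N₀ + 1)) = j by omega] at this
        exact this h
      exact ⟨N₀ + 1, by omega, fun i j hi hj =>
        iff_of_false (hnot i hi) (hnot j hj)⟩


theorem star_converges {d : ℕ} (M : Set (Fin d → ℕ)) :
    ∃ L : Set (Fin d → ℕ), LimitsTo M L ∧ Pset L = L := by
  choose Nf hNf1 hNf2 using stab_point M
  refine ⟨{x | x ∈ Pset^[Nf x] M}, ?_, ?_⟩
  · intro x
    exact ⟨Nf x, fun i hi => hNf2 x i (Nf x) hi le_rfl⟩
  · have hlim : ∀ y : Fin d → ℕ, ∀ i, Nf y ≤ i →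
        (y ∈ Pset^[i] M ↔ y ∈ {x | x ∈ Pset^[Nf x] M}) :=
      fun y i hi => hNf2 y i (Nf y) hi le_rfl
    ext x
    have hfin : (Set.Iic x).Finite := wfinite_Iic x
    set F := hfin.toFinset.sup Nf with hFdef
    have hF : ∀ y, y ≤ x → Nf y ≤ F := fun y hy =>
      Finset.le_sup (hfin.mem_toFinset.mpr hy)
    have h1 : x ∈ Pset {x | x ∈ Pset^[Nf x] M} ↔ IsP (Pset^[F] M) x := by
      rw [mem_pset]
      exact isP_congr (fun y hy => (hlim y F (hF y hy)).symm)
    have h2 : IsP (Pset^[F] M) x ↔ x ∈ Pset^[F + 1] M := by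
      rw [Function.iterate_succ_apply']
      exact Iff.rfl
    rw [h1, h2]
    exact hlim x (F + 1) (le_trans (hF x le_rfl) (Nat.le_succ F))
end

section
/- For k ≥ 1 and X ⊆ ℕ₀, the misère subtraction game X satisfies P(X) = M_k if and only if {k, 2k−1} ⊆ X ⊆ M_k, where M_k = {i(3k−1) + j : i ∈ ℕ₀, k ≤ j ≤ 2k−1}. -/
lemma isP_unfold (M : Set ℕ) (x : ℕ) :
    IsP M x ↔ ((∃ m ∈ M, m ≤ x) ∧ ∀ m ∈ M, m ≤ x →
      (Terminal M (x - m) ∨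
        ∃ m' ∈ M, m' ≤ x - m ∧ ∃ _h : x - m - m' < x, IsP M (x - m - m'))) := by
  unfold IsP
  rw [WellFounded.fix_eq]

lemma isP_iff_s12 {X : Set ℕ} (hpos : ∀ m ∈ X, 1 ≤ m) (x : ℕ) :
    IsP X x ↔ (∃ m ∈ X, m ≤ x) ∧ ∀ m ∈ X, m ≤ x → IsN X (x - m) := by
  rw [isP_unfold]
  constructor
  · rintro ⟨h1, h2⟩
    refine ⟨h1, fun m hm hmx => ?_⟩
    rcases h2 m hm hmx with h | ⟨m', hm', hle, _, hP⟩
    · exact Or.inl h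
    · exact Or.inr ⟨m', hm', hle, hP⟩
  · rintro ⟨h1, h2⟩
    refine ⟨h1, fun m hm hmx => ?_⟩
    rcases h2 m hm hmx with h | ⟨m', hm', hle, hP⟩
    · exact Or.inl h
    · have h1m := hpos m hm
      exact Or.inr ⟨m', hm', hle, by omega, hP⟩

lemma isP_iff_not_isN {X : Set ℕ} (hpos : ∀ m ∈ X, 1 ≤ m) :
    ∀ x, IsP X x ↔ ¬ IsN X x := by
  intro x
  induction x using Nat.strong_induction_on with
  | _ x ih =>
    rw [isP_iff_s12 hpos]
    constructor
    · rintro ⟨⟨m0, hm0, hm0x⟩, h2⟩ hN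
      rcases hN with hT | ⟨m, hm, hmx, hP⟩
      · exact hT m0 hm0 hm0x
      · have hlt : x - m < x := by have := hpos m hm; omega
        exact ((ih _ hlt).mp hP) (h2 m hm hmx)
    · intro hN
      rw [IsN] at hN
      push_neg at hN
      obtain ⟨hT, h2⟩ := hN
      rw [Terminal] at hT
      push_neg at hT
      obtain ⟨m0, hm0, hm0x⟩ := hT
      refine ⟨⟨m0, hm0, hm0x⟩, fun m hm hmx => ?_⟩
      have hlt : x - m < x := by have := hpos m hm; omega
      by_contra hnN
      exact h2 m hm hmx ((ih _ hlt).mpr hnN)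

lemma zero_mem_noP {X : Set ℕ} (h0 : 0 ∈ X) : ∀ x, ¬ IsP X x := by
  intro x
  induction x using Nat.strong_induction_on with
  | _ x ih =>
    rw [isP_unfold]
    rintro ⟨⟨m0, hm0, hm0x⟩, h2⟩
    rcases h2 0 h0 (Nat.zero_le x) with hT | ⟨m', hm', hle, hlt, hP⟩
    · exact hT m0 hm0 (by simpa using hm0x)
    · exact ih _ hlt hP

lemma rep_mem {k : ℕ} (hk : 1 ≤ k) {y a b : ℕ} (hy : y = (3 * k - 1) * a + b)
    (h1 : k ≤ b) (h2 : b ≤ 2 * k - 1) : y ∈ Mk k :=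
  ⟨hk, a, b, h1, h2, by rw [hy]; ring⟩

lemma rep_mod {k : ℕ} {y a b : ℕ} (hy : y = (3 * k - 1) * a + b) (hb : b < 3 * k - 1) :
    y % (3 * k - 1) = b := by
  subst hy
  rw [Nat.add_comm, Nat.add_mul_mod_self_left, Nat.mod_eq_of_lt hb]

lemma mem_Mk_iff {k : ℕ} (hk : 1 ≤ k) (x : ℕ) :
    x ∈ Mk k ↔ k ≤ x % (3 * k - 1) ∧ x % (3 * k - 1) ≤ 2 * k - 1 := by
  constructor
  · rintro ⟨-, i, j, hj1, hj2, rfl⟩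
    rw [rep_mod (a := i) (b := j) (by ring) (by omega)]
    exact ⟨hj1, hj2⟩
  · rintro ⟨h1, h2⟩
    have hrep := Nat.div_add_mod x (3 * k - 1)
    exact rep_mem hk (a := x / (3 * k - 1)) (b := x % (3 * k - 1)) (by omega) h1 h2

lemma mem_ge {k : ℕ} (hk : 1 ≤ k) {x : ℕ} (hx : x ∈ Mk k) : k ≤ x :=
  le_trans ((mem_Mk_iff hk x).mp hx).1 (Nat.mod_le x _)

lemma rep_of_mem {k : ℕ} (hk : 1 ≤ k) {x : ℕ} (hx : x ∈ Mk k) :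
    ∃ i r, x = (3 * k - 1) * i + r ∧ k ≤ r ∧ r ≤ 2 * k - 1 ∧ i = x / (3 * k - 1) := by
  rw [mem_Mk_iff hk] at hx
  have hrep := Nat.div_add_mod x (3 * k - 1)
  exact ⟨x / (3 * k - 1), x % (3 * k - 1), by omega, hx.1, hx.2, rfl⟩

lemma sub_not_mem {k : ℕ} (hk : 1 ≤ k) {x m : ℕ} (hx : x ∈ Mk k) (hm : m ∈ Mk k)
    (hmx : m ≤ x) : x - m ∉ Mk k := by
  obtain ⟨i, r, hxr, hkr, hr2, hidef⟩ := rep_of_mem hk hx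
  obtain ⟨q, s, hms, hks, hs2, hqdef⟩ := rep_of_mem hk hm
  have hq : q ≤ i := by rw [hidef, hqdef]; exact Nat.div_le_div_right hmx
  rw [mem_Mk_iff hk]
  by_cases hsr : s ≤ r
  · have key : (3 * k - 1) * (i - q) + (3 * k - 1) * q = (3 * k - 1) * i := by
      rw [← Nat.mul_add, Nat.sub_add_cancel hq]
    have hyrep : x - m = (3 * k - 1) * (i - q) + (r - s) := by omega
    rw [rep_mod (a := i - q) (b := r - s) hyrep (by omega)]
    omega
  · have hne : q ≠ i := by rintro rfl; omega
    have hqi : q + 1 ≤ i := by omega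
    have key : (3 * k - 1) * (i - q - 1) + (3 * k - 1) * (q + 1) = (3 * k - 1) * i := by
      rw [← Nat.mul_add, show i - q - 1 + (q + 1) = i by omega]
    have hD : (3 * k - 1) * (q + 1) = (3 * k - 1) * q + (3 * k - 1) := by ring
    have hyrep : x - m = (3 * k - 1) * (i - q - 1) + ((3 * k - 1) + r - s) := by omega
    rw [rep_mod (a := i - q - 1) (b := (3 * k - 1) + r - s) hyrep (by omega)]
    omega

lemma exists_move {k : ℕ} (hk : 1 ≤ k) {x : ℕ} (hx : x ∉ Mk k) (hkx : k ≤ x) :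
    ∃ m0, (m0 = k ∨ m0 = 2 * k - 1) ∧ m0 ≤ x ∧ x - m0 ∈ Mk k := by
  obtain ⟨q, r, hrep, hrp⟩ : ∃ q r, x = (3 * k - 1) * q + r ∧ r < 3 * k - 1 :=
    ⟨x / (3 * k - 1), x % (3 * k - 1), by have := Nat.div_add_mod x (3 * k - 1); omega,
      Nat.mod_lt x (by omega)⟩
  rw [mem_Mk_iff hk, rep_mod hrep hrp] at hx
  push_neg at hx
  rcases Nat.lt_or_ge r k with hr | hr
  · have hq1 : 1 ≤ q := by
      rcases Nat.eq_zero_or_pos q with rfl | h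
      · simp at hrep; omega
      · exact h
    have key : (3 * k - 1) * (q - 1) + (3 * k - 1) * 1 = (3 * k - 1) * q := by
      rw [← Nat.mul_add, show q - 1 + 1 = q by omega]
    exact ⟨2 * k - 1, Or.inr rfl, by omega,
      rep_mem hk (a := q - 1) (b := r + k) (by omega) (by omega) (by omega)⟩
  · have hr2 : 2 * k ≤ r := by omega
    exact ⟨k, Or.inl rfl, hkx,
      rep_mem hk (a := q) (b := r - k) (by omega) (by omega) (by omega)⟩

lemma exists_dom {k : ℕ} (hk : 1 ≤ k) {m : ℕ} (hm : m ∉ Mk k) :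
    ∃ x ∈ Mk k, m ≤ x ∧ x - m ∈ Mk k := by
  obtain ⟨q, s, hrep, hsp⟩ : ∃ q s, m = (3 * k - 1) * q + s ∧ s < 3 * k - 1 :=
    ⟨m / (3 * k - 1), m % (3 * k - 1), by have := Nat.div_add_mod m (3 * k - 1); omega,
      Nat.mod_lt m (by omega)⟩
  rw [mem_Mk_iff hk, rep_mod hrep hsp] at hm
  push_neg at hm
  rcases Nat.lt_or_ge s k with hs | hs
  · exact ⟨(3 * k - 1) * q + (2 * k - 1),
      rep_mem hk (a := q) (b := 2 * k - 1) rfl (by omega) le_rfl,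
      by omega,
      rep_mem hk (a := 0) (b := 2 * k - 1 - s) (by omega) (by omega) (by omega)⟩
  · have hs2 : 2 * k ≤ s := by omega
    have hD : (3 * k - 1) * (q + 1) = (3 * k - 1) * q + (3 * k - 1) := by ring
    exact ⟨(3 * k - 1) * (q + 1) + k,
      rep_mem hk (a := q + 1) (b := k) rfl le_rfl (by omega),
      by omega,
      rep_mem hk (a := 0) (b := (3 * k - 1) + k - s) (by omega) (by omega) (by omega)⟩
lemma backward {k : ℕ} (hk : 1 ≤ k) {X : Set ℕ} (hXk : k ∈ X) (hXk2 : 2 * k - 1 ∈ X)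
    (hXM : X ⊆ Mk k) : ∀ x, IsP X x ↔ x ∈ Mk k := by
  have hge : ∀ m ∈ X, k ≤ m := fun m hm => mem_ge hk (hXM hm)
  have hpos : ∀ m ∈ X, 1 ≤ m := fun m hm => le_trans hk (hge m hm)
  intro x
  induction x using Nat.strong_induction_on with
  | _ x ih =>
    rw [isP_iff_s12 hpos]
    by_cases hx : x ∈ Mk k
    · have hxk : k ≤ x := mem_ge hk hx
      refine ⟨fun _ => hx, fun _ => ⟨⟨k, hXk, hxk⟩, fun m hm hmx => ?_⟩⟩
      have hymem := sub_not_mem hk hx (hXM hm) hmx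
      by_cases hyk : k ≤ x - m
      · obtain ⟨m0, hm00, hm0y, hmem⟩ := exists_move hk hymem hyk
        have hm0X : m0 ∈ X := by rcases hm00 with rfl | rfl; exacts [hXk, hXk2]
        refine Or.inr ⟨m0, hm0X, hm0y, ?_⟩
        have hlt : x - m - m0 < x := by have := hge m hm; omega
        exact (ih _ hlt).mpr hmem
      · exact Or.inl fun m' hm' hle => hyk (le_trans (hge m' hm') hle)
    · constructor
      · rintro ⟨⟨m0, hm0, hm0x⟩, h2⟩
        exfalso
        have hxk : k ≤ x := le_trans (hge m0 hm0) hm0x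
        obtain ⟨m1, hm10, hm1x, hmem⟩ := exists_move hk hx hxk
        have hm1X : m1 ∈ X := by rcases hm10 with rfl | rfl; exacts [hXk, hXk2]
        rcases h2 m1 hm1X hm1x with hT | ⟨m', hm', hle, hP⟩
        · exact hT k hXk (mem_ge hk hmem)
        · have hnm : x - m1 - m' ∉ Mk k := sub_not_mem hk hmem (hXM hm') hle
          have hlt : x - m1 - m' < x := by have := hge m1 hm1X; omega
          exact hnm ((ih _ hlt).mp hP)
      · intro h; exact absurd h hx

theorem Pset_eq_Mk_iff (k : ℕ) (hk : 1 ≤ k) (X : Set ℕ) :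
    Pset X = Mk k ↔ ({k, 2 * k - 1} : Set ℕ) ⊆ X ∧ X ⊆ Mk k := by
  constructor
  · intro hP
    have hiff : ∀ x, IsP X x ↔ x ∈ Mk k := fun x => Set.ext_iff.mp hP x
    have hkMk : k ∈ Mk k := rep_mem hk (a := 0) (b := k) (by omega) le_rfl (by omega)
    have h0 : 0 ∉ X := by
      intro h0
      exact zero_mem_noP h0 k ((hiff k).mpr hkMk)
    have hpos : ∀ m ∈ X, 1 ≤ m := by
      intro m hm
      rcases Nat.eq_zero_or_pos m with rfl | h
      · exact absurd hm h0
      · exact h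
    have part := isP_iff_not_isN hpos
    have hPk : IsP X k := (hiff k).mpr hkMk
    obtain ⟨⟨mw, hmw, hmwk⟩, -⟩ := (isP_iff_s12 hpos k).mp hPk
    obtain ⟨a, haX, hamin⟩ := (Nat.lt_wfRel.wf).has_min X ⟨mw, hmw⟩
    have hale : ∀ m ∈ X, a ≤ m := fun m hm => not_lt.mp (hamin m hm)
    have hPa : IsP X a := by
      rw [isP_iff_s12 hpos]
      refine ⟨⟨a, haX, le_rfl⟩, fun m hm hma => ?_⟩
      have hma' : m = a := le_antisymm hma (hale m hm)
      subst hma'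
      left
      intro m' hm' hle
      have := hpos m' hm'
      omega
    have hak : k ≤ a := mem_ge hk ((hiff a).mp hPa)
    have hak' : a = k := le_antisymm (le_trans (hale mw hmw) hmwk) hak
    subst hak'
    have hkX : a ∈ X := haX
    have hge : ∀ m ∈ X, a ≤ m := hale
    have hXM : X ⊆ Mk a := by
      intro m hm
      by_contra hmM
      obtain ⟨x, hxMk, hmx, hxm⟩ := exists_dom hk hmM
      have hPx : IsP X x := (hiff x).mpr hxMk
      have hN : IsN X (x - m) := ((isP_iff_s12 hpos x).mp hPx).2 m hm hmx
      exact (part _).mp ((hiff _).mpr hxm) hN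
    have h2k : 2 * a - 1 ∈ X := by
      have hx0 : (4 * a - 2) ∉ Mk a := by
        rw [mem_Mk_iff hk, rep_mod (a := 1) (b := a - 1) (by omega) (by omega)]
        omega
      have hnP : ¬ IsP X (4 * a - 2) := fun h => hx0 ((hiff _).mp h)
      have hN : IsN X (4 * a - 2) := by
        by_contra hN
        exact hnP ((part _).mpr hN)
      rcases hN with hT | ⟨m, hmX, hmx, hPy⟩
      · exact (hT a hkX (by omega)).elim
      · obtain ⟨i, r, hmr, hkr, hr2, -⟩ := rep_of_mem hk (hXM hmX)
        have hi0 : i = 0 := by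
          by_contra hi
          have h1i : 1 ≤ i := Nat.one_le_iff_ne_zero.mpr hi
          have : (3 * a - 1) * 1 ≤ (3 * a - 1) * i := Nat.mul_le_mul_left _ h1i
          omega
        rw [hi0, Nat.mul_zero, Nat.zero_add] at hmr
        have hy : 4 * a - 2 - m ∈ Mk a := (hiff _).mp hPy
        obtain ⟨i2, r2, hyr, hkr2, hr22, -⟩ := rep_of_mem hk hy
        have hi20 : i2 = 0 := by
          by_contra hi
          have h1i : 1 ≤ i2 := Nat.one_le_iff_ne_zero.mpr hi
          have : (3 * a - 1) * 1 ≤ (3 * a - 1) * i2 := Nat.mul_le_mul_left _ h1i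
          omega
        rw [hi20, Nat.mul_zero, Nat.zero_add] at hyr
        exact (show m = 2 * a - 1 by omega) ▸ hmX
    refine ⟨?_, hXM⟩
    intro y hy
    simp only [Set.mem_insert_iff, Set.mem_singleton_iff] at hy
    rcases hy with rfl | rfl
    exacts [hkX, h2k]
  · rintro ⟨hsub, hXM⟩
    have hk1 : k ∈ X := hsub (Set.mem_insert k _)
    have hk2 : 2 * k - 1 ∈ X := hsub (Set.mem_insert_iff.mpr (Or.inr rfl))
    ext x
    exact backward hk hk1 hk2 hXM x
end
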